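/- Let P(T) = qT^2 + (h-(q+1))T + 1 with q a prime power and h a positive integer satisfying |h-(q+1)| ≤ 2√q. Then both roots of P have absolute value q^{-1/2}. -/

import Mathlib

/-!
Write `z = x + iy`. The imaginary part of `a z² + b z + c = 0` is `y (2ax + b) = 0`, and if `y = 0`
then `(2ax + b)²` equals the discriminant `b² - 4ac`, which the Hasse bound makes nonpositive.
Either way `2ax = -b`, and the real part then collapses to `a (x² + y²) = c`, i.e. `q ‖z‖² = 1`.
-/

open Complex

theorem normSq_eq_div_of_discrim_nonpos {a b c : ℝ} (ha : a ≠ 0) (hdisc : discrim a b c ≤ 0)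
    {z : ℂ} (hz : (a : ℂ) * z ^ 2 + b * z + c = 0) : normSq z = c / a := by
  have hre : a * (z.re ^ 2 - z.im ^ 2) + b * z.re + c = 0 := by
    simpa [sq] using congrArg re hz
  have him : z.im * (2 * a * z.re + b) = 0 := by
    have := congrArg im hz
    simp only [add_im, mul_im, ofReal_re, ofReal_im, sq, mul_re, zero_mul, add_zero,
      zero_im] at this
    linear_combination this
  have hvertex : 2 * a * z.re + b = 0 := by
    rcases mul_eq_zero.mp him with hreal | hvertex
    · have hsq : (2 * a * z.re + b) ^ 2 = discrim a b c := by
        rw [discrim]; linear_combination (4 * a) * hre + 4 * a ^ 2 * z.im * hreal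
      nlinarith [sq_nonneg (2 * a * z.re + b)]
    · exact hvertex
  rw [normSq_apply, eq_div_iff ha]
  linear_combination -hre + z.re * hvertex

theorem riemann_hypothesis_elliptic_general (q h : ℕ) (hq : IsPrimePow q)
    (hasse : |(h : ℝ) - ((q : ℝ) + 1)| ≤ 2 * Real.sqrt q) :
    ∀ z : ℂ, (q : ℂ) * z ^ 2 + ((h : ℂ) - ((q : ℂ) + 1)) * z + 1 = 0 →
      ‖z‖ = (Real.sqrt q)⁻¹ := by
  intro z hz
  have hq0 : (q : ℝ) ≠ 0 := by exact_mod_cast hq.ne_zero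
  have hdisc : discrim (q : ℝ) (h - (q + 1)) 1 ≤ 0 := by
    have hsq := pow_le_pow_left₀ (abs_nonneg _) hasse 2
    rw [sq_abs, mul_pow, Real.sq_sqrt (Nat.cast_nonneg q)] at hsq
    rw [discrim]
    linarith
  have hnormSq := normSq_eq_div_of_discrim_nonpos hq0 hdisc (by push_cast; exact hz)
  rw [norm_def, hnormSq, one_div, Real.sqrt_inv]

/-- if the class number `h` of an elliptic function field over `𝔽_q` satisfies
the Hasse bound `|h-(q+1)| ≤ 2√q`, then every root of the zeta numerator
`P(T) = qT² + (h-(q+1))T + 1` has absolute value `q^{-1/2}` (the Riemann hypothesis). -/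
theorem riemann_hypothesis_elliptic (q h : ℕ) (hq : IsPrimePow q) (hh : 0 < h)
    (hasse : |(h : ℝ) - ((q : ℝ) + 1)| ≤ 2 * Real.sqrt q) :
    ∀ z : ℂ, (q : ℂ) * z ^ 2 + ((h : ℂ) - ((q : ℂ) + 1)) * z + 1 = 0 →
      ‖z‖ = (Real.sqrt q)⁻¹ :=
  riemann_hypothesis_elliptic_general q h hq hasse
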